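/- Define g_λ(x) = (βγ−1)·x·log(λ/x) / ((βx+1)(x+γ)·log((x+γ)/(βx+1))) for 0 < x ≤ λ, with βγ > 1, β ≤ γ, λ < λ_c. Then there exists α < 1 such that g_λ(x) ≤ α for all x ∈ (0, λ]. -/

import Mathlib

/-!
The potential `F(x) = log x + (βx+1)(x+γ) log((x+γ)/(βx+1)) / ((βγ-1)x)` is built so that
`g_{λ_c}(x) ≤ 1` says exactly `log λ_c ≤ F(x)`. Its derivative is
`(βx² - γ) log((x+γ)/(βx+1)) / ((βγ-1)x²)`, and the logarithm is nonnegative on `[0, λ_c]`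
because `λ_c (β - 1) ≤ γ - 1`; so `F` is minimal at `√(γ/β)`, where it equals `log λ_c`.
As `log λ < log λ_c`, this gives `g_λ < 1` on `(0, λ]`. Finally `g_λ`, which takes the value `0`
at `0`, is continuous on the compact interval `[0, λ]`, and its maximum there is the required `α`.
-/

open Real Set

lemma mul_sinh_le_sinh_mul {s w : ℝ} (hs : 1 ≤ s) (hw : 0 ≤ w) : s * sinh w ≤ sinh (s * w) := by
  have hmono : MonotoneOn (fun w => sinh (s * w) - s * sinh w) (Ici 0) := by
    refine monotoneOn_of_hasDerivWithinAt_nonneg (convex_Ici 0) (by fun_prop)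
      (fun w _ => (((hasDerivAt_sinh (s * w)).comp w ((hasDerivAt_id w).const_mul s)).sub
        ((hasDerivAt_sinh w).const_mul s)).hasDerivWithinAt) fun w hw => ?_
    rw [interior_Ici, mem_Ioi] at hw
    have hcosh : cosh w ≤ cosh (s * w) := cosh_le_cosh.2 (by
      rw [abs_of_pos hw, abs_of_pos (by positivity)]; nlinarith)
    simp only [mul_one]
    nlinarith
  simpa using hmono self_mem_Ici hw hw

/-- With `a = (s - 1) w`, this is `s sinh w ≤ sinh (s w)` multiplied by `2 e^{s w}`. -/
lemma exp_mul_sub_one_le {s a : ℝ} (hs : 1 < s) (ha : 0 ≤ a) :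
    exp (s / (s - 1) * (2 * a)) * (s * exp (-a) - 1) ≤ s * exp a - 1 := by
  have hs1 : s - 1 ≠ 0 := (sub_pos.2 hs).ne'
  obtain ⟨w, hw, rfl⟩ : ∃ w, 0 ≤ w ∧ a = (s - 1) * w :=
    ⟨a / (s - 1), div_nonneg ha (sub_pos.2 hs).le, by field_simp⟩
  have hsinh := mul_sinh_le_sinh_mul hs.le hw
  rw [sinh_eq, sinh_eq] at hsinh
  have hexp_two_mul : exp (s / (s - 1) * (2 * ((s - 1) * w))) = exp (s * w) ^ 2 := by
    rw [← exp_nat_mul]; field_simp; ring_nf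
  have hexp_sub_one : exp ((s - 1) * w) = exp (s * w) * exp (-w) := by rw [← exp_add]; ring_nf
  have hexp_neg_sub_one : exp (-((s - 1) * w)) = exp (-(s * w)) * exp w := by
    rw [← exp_add]; ring_nf
  have hexp_mul_exp_neg : exp (s * w) * exp (-(s * w)) = 1 := by rw [← exp_add]; simp
  rw [hexp_two_mul, hexp_sub_one, hexp_neg_sub_one]
  linear_combination (2 * exp (s * w)) * hsinh + (s * exp w * exp (s * w) - 1) * hexp_mul_exp_neg

noncomputable def lambdaC (β γ : ℝ) : ℝ := (γ / β) ^ (√(β * γ) / (√(β * γ) - 1))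

section
variable {β γ : ℝ}

lemma one_lt_sqrt_mul (h1 : 1 < β * γ) : 1 < √(β * γ) :=
  lt_sqrt_of_sq_lt (by simpa using h1)

lemma mul_sqrt_div (hβ : 0 < β) (hγ : 0 < γ) : β * √(γ / β) = √(β * γ) := by
  rw [← sqrt_sq hβ.le, ← sqrt_mul (sq_nonneg β), sqrt_sq hβ.le]
  congr 1
  field_simp

lemma sqrt_mul_mul_sqrt_div (hβ : 0 < β) (hγ : 0 < γ) : √(β * γ) * √(γ / β) = γ := by
  rw [← sqrt_mul (mul_pos hβ hγ).le, show β * γ * (γ / β) = γ ^ 2 by field_simp, sqrt_sq hγ.le]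

lemma sqrt_div_le_lambdaC (hβ : 0 < β) (h1 : 1 < β * γ) (hle : β ≤ γ) :
    √(γ / β) ≤ lambdaC β γ := by
  have hs := one_lt_sqrt_mul h1
  rw [sqrt_eq_rpow]
  refine rpow_le_rpow_of_exponent_le ((one_le_div hβ).2 hle) ?_
  rw [le_div_iff₀ (by linarith)]
  linarith

/-- With `s = √(βγ)` and `a = log (γ/β) / 2` one has `β = s e^{-a}`, `γ = s e^a` and
`λ_c = e^{2sa/(s-1)}`, which turns the claim into `exp_mul_sub_one_le`. -/
lemma lambdaC_mul_sub_one_le (hβ : 0 < β) (hγ : 0 < γ) (h1 : 1 < β * γ) (hle : β ≤ γ) :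
    lambdaC β γ * (β - 1) ≤ γ - 1 := by
  have hdiv : 0 < γ / β := div_pos hγ hβ
  have ht : √(γ / β) = exp (log (γ / β) / 2) := by
    rw [← log_sqrt hdiv.le, exp_log (sqrt_pos.2 hdiv)]
  have hcross := exp_mul_sub_one_le (one_lt_sqrt_mul h1)
    (div_nonneg (log_nonneg ((one_le_div hβ).2 hle)) zero_le_two)
  have hΛ : exp (√(β * γ) / (√(β * γ) - 1) * log (γ / β)) = lambdaC β γ := by
    rw [lambdaC, rpow_def_of_pos hdiv, mul_comm]
  have hβe : √(β * γ) * exp (-(log (γ / β) / 2)) = β := by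
    rw [exp_neg, ← ht, ← mul_sqrt_div hβ hγ, mul_inv_cancel_right₀ (sqrt_pos.2 hdiv).ne']
  rwa [mul_div_cancel₀ _ two_ne_zero, hΛ, hβe, ← ht, sqrt_mul_mul_sqrt_div hβ hγ] at hcross

lemma log_add_div_mul_add_one_nonneg (hβ : 0 < β) (hγ : 0 < γ) (h1 : 1 < β * γ) (hle : β ≤ γ)
    {y : ℝ} (hy : 0 ≤ y) (hyc : y ≤ lambdaC β γ) : 0 ≤ log ((y + γ) / (β * y + 1)) := by
  have hcross := lambdaC_mul_sub_one_le hβ hγ h1 hle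
  refine log_nonneg ((one_le_div (by positivity)).2 ?_)
  rcases le_total β 1 with hβ1 | hβ1 <;> nlinarith

noncomputable def potential (β γ x : ℝ) : ℝ :=
  log x + (β * x + 1) * (x + γ) * log ((x + γ) / (β * x + 1)) / ((β * γ - 1) * x)

lemma hasDerivAt_potential (hβ : 0 ≤ β) (hγ : 0 < γ) (h1 : β * γ ≠ 1) {x : ℝ} (hx : 0 < x) :
    HasDerivAt (potential β γ)
      ((β * x ^ 2 - γ) * log ((x + γ) / (β * x + 1)) / ((β * γ - 1) * x ^ 2)) x := by
  have hA : β * x + 1 ≠ 0 := by positivity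
  have hB : x + γ ≠ 0 := by positivity
  have hc : β * γ - 1 ≠ 0 := sub_ne_zero.2 h1
  have hA' : HasDerivAt (fun x => β * x + 1) β x := by
    simpa using ((hasDerivAt_id x).const_mul β).add_const 1
  have hB' : HasDerivAt (fun x => x + γ) 1 x := (hasDerivAt_id x).add_const γ
  have hlog : HasDerivAt (fun x => log ((x + γ) / (β * x + 1)))
      ((1 * (β * x + 1) - (x + γ) * β) / (β * x + 1) ^ 2 / ((x + γ) / (β * x + 1))) x :=
    (hB'.fun_div hA' hA).log (div_ne_zero hB hA)
  have hden : HasDerivAt (fun x => (β * γ - 1) * x) (β * γ - 1) x := by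
    simpa using (hasDerivAt_id x).const_mul (β * γ - 1)
  refine ((hasDerivAt_log hx.ne').add
    (((hA'.fun_mul hB').fun_mul hlog).fun_div hden (by positivity))).congr_deriv ?_
  field_simp
  ring

lemma potential_sqrt_div (hβ : 0 < β) (hγ : 0 < γ) (h1 : 1 < β * γ) :
    potential β γ √(γ / β) = log (lambdaC β γ) := by
  have hs := one_lt_sqrt_mul h1
  have hdiv : 0 < γ / β := div_pos hγ hβ
  have ht : 0 < √(γ / β) := sqrt_pos.2 hdiv
  have hlog : log (γ / β) = 2 * log √(γ / β) := by rw [log_sqrt hdiv.le]; ring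
  have hsq : β * γ = √(β * γ) ^ 2 := (sq_sqrt (mul_pos hβ hγ).le).symm
  have hβt := mul_sqrt_div hβ hγ
  have hγst := sqrt_mul_mul_sqrt_div hβ hγ
  rw [potential, lambdaC, log_rpow hdiv, hlog, hβt]
  set s := √(β * γ)
  set t := √(γ / β)
  rw [hsq]
  have hratio : (t + γ) / (s + 1) = t := by
    rw [← hγst]; field_simp; ring
  have hs1 : s - 1 ≠ 0 := (sub_pos.2 hs).ne'
  have hs2 : s ^ 2 - 1 ≠ 0 := by nlinarith
  rw [hratio, ← hγst]
  field_simp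
  ring

lemma mul_sq_le_iff_le_sqrt_div (hβ : 0 < β) (hγ : 0 < γ) {y : ℝ} (hy : 0 ≤ y) :
    β * y ^ 2 ≤ γ ↔ y ≤ √(γ / β) := by
  rw [le_sqrt hy (div_pos hγ hβ).le, le_div_iff₀ hβ, mul_comm]

lemma potential_antitoneOn (hβ : 0 < β) (hγ : 0 < γ) (h1 : 1 < β * γ) (hle : β ≤ γ) :
    AntitoneOn (potential β γ) (Ioc 0 √(γ / β)) := by
  have hderiv := fun {y : ℝ} (hy : 0 < y) => hasDerivAt_potential hβ.le hγ h1.ne' hy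
  refine antitoneOn_of_hasDerivWithinAt_nonpos (convex_Ioc 0 _)
    (fun y hy => (hderiv hy.1).continuousAt.continuousWithinAt)
    (fun y hy => (hderiv (interior_subset hy).1).hasDerivWithinAt) fun y hy => ?_
  rw [interior_Ioc] at hy
  have hyc := hy.2.le.trans (sqrt_div_le_lambdaC hβ h1 hle)
  have hβy := (mul_sq_le_iff_le_sqrt_div hβ hγ hy.1.le).2 hy.2.le
  have hc : 0 < β * γ - 1 := by linarith
  exact div_nonpos_of_nonpos_of_nonneg (mul_nonpos_of_nonpos_of_nonneg (by linarith)
    (log_add_div_mul_add_one_nonneg hβ hγ h1 hle hy.1.le hyc)) (by positivity)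

lemma potential_monotoneOn (hβ : 0 < β) (hγ : 0 < γ) (h1 : 1 < β * γ) (hle : β ≤ γ) :
    MonotoneOn (potential β γ) (Icc √(γ / β) (lambdaC β γ)) := by
  have ht : 0 < √(γ / β) := sqrt_pos.2 (div_pos hγ hβ)
  have hderiv := fun {y : ℝ} (hy : 0 < y) => hasDerivAt_potential hβ.le hγ h1.ne' hy
  refine monotoneOn_of_hasDerivWithinAt_nonneg (convex_Icc _ _)
    (fun y hy => (hderiv (ht.trans_le hy.1)).continuousAt.continuousWithinAt)
    (fun y hy => (hderiv (ht.trans_le (interior_subset hy).1)).hasDerivWithinAt) fun y hy => ?_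
  rw [interior_Icc] at hy
  have hy0 := ht.trans hy.1
  have hβy := (mul_sq_le_iff_le_sqrt_div hβ hγ hy0.le).not.2 (not_le.2 hy.1)
  have hc : 0 < β * γ - 1 := by linarith
  exact div_nonneg (mul_nonneg (by linarith)
    (log_add_div_mul_add_one_nonneg hβ hγ h1 hle hy0.le hy.2.le)) (by positivity)

lemma log_lambdaC_le_potential (hβ : 0 < β) (hγ : 0 < γ) (h1 : 1 < β * γ) (hle : β ≤ γ)
    {x : ℝ} (hx : 0 < x) (hxc : x ≤ lambdaC β γ) : log (lambdaC β γ) ≤ potential β γ x := by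
  have ht : 0 < √(γ / β) := sqrt_pos.2 (div_pos hγ hβ)
  rw [← potential_sqrt_div hβ hγ h1]
  rcases le_total x √(γ / β) with hxt | htx
  · exact potential_antitoneOn hβ hγ h1 hle ⟨hx, hxt⟩ ⟨ht, le_rfl⟩ hxt
  · exact potential_monotoneOn hβ hγ h1 hle ⟨le_rfl, sqrt_div_le_lambdaC hβ h1 hle⟩ ⟨htx, hxc⟩ htx

lemma mul_sub_log_le (hβ : 0 < β) (hγ : 0 < γ) (h1 : 1 < β * γ) (hle : β ≤ γ)
    {x : ℝ} (hx : 0 < x) (hxc : x ≤ lambdaC β γ) :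
    (β * γ - 1) * x * (log (lambdaC β γ) - log x) ≤
      (β * x + 1) * (x + γ) * log ((x + γ) / (β * x + 1)) := by
  have hc : 0 < (β * γ - 1) * x := mul_pos (by linarith) hx
  have := log_lambdaC_le_potential hβ hγ h1 hle hx hxc
  rw [potential, ← sub_le_iff_le_add', le_div_iff₀ hc] at this
  linarith

lemma continuous_mul_log_div {c : ℝ} (hc : c ≠ 0) : Continuous fun x : ℝ => x * log (c / x) := by
  have : (fun x : ℝ => x * log (c / x)) = fun x => x * log c - x * log x := by
    funext x
    rcases eq_or_ne x 0 with rfl | hx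
    · simp
    · rw [log_div hc hx]; ring
  rw [this]
  fun_prop

noncomputable def g (β γ lam x : ℝ) : ℝ :=
  (β * γ - 1) * x * log (lam / x) / ((β * x + 1) * (x + γ) * log ((x + γ) / (β * x + 1)))

lemma continuousAt_g {lam x : ℝ} (hlam : lam ≠ 0)
    (hD : (β * x + 1) * (x + γ) * log ((x + γ) / (β * x + 1)) ≠ 0) :
    ContinuousAt (g β γ lam) x := by
  have hlog : log ((x + γ) / (β * x + 1)) ≠ 0 := right_ne_zero_of_mul hD
  have hA : β * x + 1 ≠ 0 := fun h => hlog (by simp [h])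
  have hratio : (x + γ) / (β * x + 1) ≠ 0 := fun h => hlog (by simp [h])
  have hnum : Continuous fun x => (β * γ - 1) * x * log (lam / x) := by
    simpa only [mul_assoc] using (continuous_mul_log_div hlam).const_mul (β * γ - 1)
  exact hnum.continuousAt.div (by fun_prop (disch := assumption)) hD

lemma g_denominator_pos (hβ : 0 < β) (hγ : 0 < γ) (h1 : 1 < β * γ) (hle : β ≤ γ)
    {x : ℝ} (hx : 0 ≤ x) (hxc : x < lambdaC β γ) :
    0 < (β * x + 1) * (x + γ) * log ((x + γ) / (β * x + 1)) := by
  rcases hx.eq_or_lt with rfl | hx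
  · have hγ1 : 1 < γ := by nlinarith
    simpa using mul_pos hγ (log_pos hγ1)
  · refine lt_of_lt_of_le ?_ (mul_sub_log_le hβ hγ h1 hle hx hxc.le)
    have := log_lt_log hx hxc
    have hc : 0 < β * γ - 1 := by linarith
    exact mul_pos (mul_pos hc hx) (by linarith)

lemma g_lt_one (hβ : 0 < β) (hγ : 0 < γ) (h1 : 1 < β * γ) (hle : β ≤ γ) {lam x : ℝ}
    (hlam : 0 < lam) (hlamc : lam < lambdaC β γ) (hx : 0 ≤ x) (hxl : x ≤ lam) :
    g β γ lam x < 1 := by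
  rcases hx.eq_or_lt with rfl | hx
  · simp [g]
  rw [g, div_lt_one (g_denominator_pos hβ hγ h1 hle hx.le (hxl.trans_lt hlamc)),
    log_div hlam.ne' hx.ne']
  refine lt_of_lt_of_le ?_ (mul_sub_log_le hβ hγ h1 hle hx (hxl.trans hlamc.le))
  have hc : 0 < (β * γ - 1) * x := mul_pos (by linarith) hx
  exact mul_lt_mul_of_pos_left (by linarith [log_lt_log hlam hlamc]) hc

end

theorem stmt_13 (β γ lam : ℝ) (hβ : 0 < β) (hγ : 0 < γ) (h1 : 1 < β * γ) (hle : β ≤ γ)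
    (hlam : 0 < lam)
    (hlamc : lam < (γ / β) ^ (Real.sqrt (β * γ) / (Real.sqrt (β * γ) - 1))) :
    ∃ α : ℝ, α < 1 ∧ ∀ x : ℝ, 0 < x → x ≤ lam →
      (β * γ - 1) * x * Real.log (lam / x) /
          ((β * x + 1) * (x + γ) * Real.log ((x + γ) / (β * x + 1))) ≤ α := by
  have hcont : ContinuousOn (g β γ lam) (Icc 0 lam) := fun x hx =>
    (continuousAt_g hlam.ne' (g_denominator_pos hβ hγ h1 hle hx.1
      (hx.2.trans_lt hlamc)).ne').continuousWithinAt
  obtain ⟨x₀, hx₀, hmax⟩ := isCompact_Icc.exists_isMaxOn (nonempty_Icc.2 hlam.le) hcont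
  exact ⟨g β γ lam x₀, g_lt_one hβ hγ h1 hle hlam hlamc hx₀.1 hx₀.2,
    fun x hx hxl => hmax ⟨hx.le, hxl⟩⟩
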